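/- arXiv:2505.21952 — 5 statements merged into one kernel-verified Lean document; each statement's English description precedes it below -/
import Mathlib

section
/- If for every channel μ one has max_{a_j^(μ)} min_{a_{-j}^(μ)} B^(μ) < min_{a_j^(μ)} max_{a_{-j}^(μ)} B^(μ), then no α₀ ∈ ℝ satisfies Σ_μ max_{a_j^(μ)} min_{a_{-j}^(μ)} B^(μ) + α₀ ≥ 0 and Σ_μ min_{a_j^(μ)} max_{a_{-j}^(μ)} B^(μ) + α₀ ≤ 0; that is, if ZD strategies setting the value of B^(μ) do not exist in any channel, then ZD strategies setting the value of Σ_μ B^(μ) do not exist in the multichannel game. -/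
noncomputable def maxmin {A B : Type*} [Fintype A] [Nonempty A] [Fintype B] [Nonempty B]
    (f : A → B → ℝ) : ℝ :=
  Finset.univ.sup' Finset.univ_nonempty fun a =>
    Finset.univ.inf' Finset.univ_nonempty fun b => f a b

noncomputable def minmax {A B : Type*} [Fintype A] [Nonempty A] [Fintype B] [Nonempty B]
    (f : A → B → ℝ) : ℝ :=
  Finset.univ.inf' Finset.univ_nonempty fun a =>
    Finset.univ.sup' Finset.univ_nonempty fun b => f a b

theorem no_ZD_multichannel {M : ℕ} (hM : 1 ≤ M)
    (A B : Fin M → Type*) [∀ μ, Fintype (A μ)] [∀ μ, Nonempty (A μ)]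
    [∀ μ, Fintype (B μ)] [∀ μ, Nonempty (B μ)]
    (Bf : ∀ μ, A μ → B μ → ℝ)
    (h : ∀ μ, maxmin (Bf μ) < minmax (Bf μ)) :
    ¬ ∃ α₀ : ℝ, (∑ μ, maxmin (Bf μ)) + α₀ ≥ 0 ∧
      (∑ μ, minmax (Bf μ)) + α₀ ≤ 0 := by
  rintro ⟨α₀, h1, h2⟩
  have hne : (Finset.univ : Finset (Fin M)).Nonempty := by
    have : Nonempty (Fin M) := Fin.pos_iff_nonempty.mp hM
    exact Finset.univ_nonempty
  have hlt : (∑ μ, maxmin (Bf μ)) < ∑ μ, minmax (Bf μ) :=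
    Finset.sum_lt_sum_of_nonempty hne fun μ _ => h μ
  linarith
end

section
/- If a fair ZD strategy controlling s̃_1 − s̃_2 exists in a multichannel two-player symmetric game (i.e., Σ_μ max_{a_1^(μ)} min_{a_2^(μ)} (s_1^(μ)−s_2^(μ)) ≥ 0 and Σ_μ min_{a_1^(μ)} max_{a_2^(μ)} (s_1^(μ)−s_2^(μ)) ≤ 0), then in every channel μ, max_{a_1} min_{a_2} (s_1^(μ)−s_2^(μ)) ≥ 0 and min_{a_1} max_{a_2} (s_1^(μ)−s_2^(μ)) ≤ 0, i.e., a fair ZD strategy exists in every channel. -/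
theorem fair_ZD_multichannel_implies_every_channel {M : ℕ} (hM : 1 ≤ M)
    (A : Fin M → Type*) [∀ μ, Fintype (A μ)] [∀ μ, Nonempty (A μ)]
    (s1 s2 : ∀ μ, A μ → A μ → ℝ)
    (hsym : ∀ μ a1 a2, s2 μ a1 a2 = s1 μ a2 a1)
    (h1 : (∑ μ, maxmin (fun a1 a2 => s1 μ a1 a2 - s2 μ a1 a2)) ≥ 0)
    (h2 : (∑ μ, minmax (fun a1 a2 => s1 μ a1 a2 - s2 μ a1 a2)) ≤ 0) :
    ∀ μ, maxmin (fun a1 a2 => s1 μ a1 a2 - s2 μ a1 a2) ≥ 0 ∧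
      minmax (fun a1 a2 => s1 μ a1 a2 - s2 μ a1 a2) ≤ 0 := by
  have hdiag : ∀ μ (a : A μ), s1 μ a a - s2 μ a a = 0 := by
    intro μ a; rw [hsym]; ring
  have hmaxmin : ∀ μ, maxmin (fun a1 a2 => s1 μ a1 a2 - s2 μ a1 a2) ≤ 0 := by
    intro μ
    apply Finset.sup'_le
    intro a _
    exact le_trans (Finset.inf'_le _ (Finset.mem_univ a)) (le_of_eq (hdiag μ a))
  have hminmax : ∀ μ, 0 ≤ minmax (fun a1 a2 => s1 μ a1 a2 - s2 μ a1 a2) := by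
    intro μ
    apply Finset.le_inf'
    intro a _
    calc (0 : ℝ) = s1 μ a a - s2 μ a a := (hdiag μ a).symm
      _ ≤ _ := Finset.le_sup' (fun b => s1 μ a b - s2 μ a b) (Finset.mem_univ a)
  have h1' : ∀ μ ∈ Finset.univ, maxmin (fun a1 a2 => s1 μ a1 a2 - s2 μ a1 a2) = 0 := by
    have := Finset.sum_eq_zero_iff_of_nonpos
      (f := fun μ => maxmin (fun a1 a2 => s1 μ a1 a2 - s2 μ a1 a2))
      (s := Finset.univ) (fun μ _ => hmaxmin μ)
    exact this.mp (le_antisymm (Finset.sum_nonpos fun μ _ => hmaxmin μ) h1)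
  have h2' : ∀ μ ∈ Finset.univ, minmax (fun a1 a2 => s1 μ a1 a2 - s2 μ a1 a2) = 0 := by
    have := Finset.sum_eq_zero_iff_of_nonneg
      (f := fun μ => minmax (fun a1 a2 => s1 μ a1 a2 - s2 μ a1 a2))
      (s := Finset.univ) (fun μ _ => hminmax μ)
    exact this.mp (le_antisymm h2 (Finset.sum_nonneg fun μ _ => hminmax μ))
  intro μ
  exact ⟨le_of_eq (h1' μ (Finset.mem_univ μ)).symm, le_of_eq (h2' μ (Finset.mem_univ μ))⟩
end

section
/- In the two-channel game whose channel 1 is a prisoner's dilemma (player 2 payoffs R,T,S,P with T>R>P>S) and channel 2 is matching pennies, an equalizer strategy of player 1 enforcing ⟨s̃_2⟩ = r exists if and only if P + 1 ≤ r ≤ R − 1; in particular such an r exists iff P ≤ R − 2. -/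
/-- Channel 1: prisoner's dilemma; Channel 2: matching pennies.
Actions: `true` = C (resp. 1), `false` = D (resp. 2). -/
theorem PD_plus_matching_pennies_equalizer (R S T P : ℝ)
    (s21 s22 : Bool → Bool → ℝ)
    (hpay1 : s21 true true = R ∧ s21 true false = T ∧
      s21 false true = S ∧ s21 false false = P)
    (hord : T > R ∧ R > P ∧ P > S)
    (hpay2 : s22 true true = -1 ∧ s22 true false = 1 ∧
      s22 false true = 1 ∧ s22 false false = -1) :
    (∀ r : ℝ, ((maxmin s21 + maxmin s22 ≥ r) ∧ (minmax s21 + minmax s22 ≤ r)) ↔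
      (P + 1 ≤ r ∧ r ≤ R - 1)) ∧
    ((∃ r : ℝ, (maxmin s21 + maxmin s22 ≥ r) ∧ (minmax s21 + minmax s22 ≤ r)) ↔
      P ≤ R - 2) := by

  obtain ⟨h1,h2,h3,h4⟩ := hpay1
  obtain ⟨q1,q2,q3,q4⟩ := hpay2
  obtain ⟨o1,o2,o3⟩ := hord
  have e1 : maxmin s21 = R := by
    simp [maxmin, Fintype.univ_bool, h1, h2, h3, h4]
    rw [inf_eq_left.mpr o1.le, inf_eq_left.mpr o3.le, sup_eq_left.mpr (by linarith)]
  have e2 : maxmin s22 = -1 := by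
    simp [maxmin, Fintype.univ_bool, q1, q2, q3, q4]
  have e3 : minmax s21 = P := by
    simp [minmax, Fintype.univ_bool, h1, h2, h3, h4]
    rw [sup_eq_right.mpr o1.le, sup_eq_right.mpr o3.le, inf_eq_right.mpr (by linarith)]
  have e4 : minmax s22 = 1 := by
    simp [minmax, Fintype.univ_bool, q1, q2, q3, q4]
  rw [e1, e2, e3, e4]
  constructor
  · intro r; constructor <;> (intro h; constructor <;> linarith [h.1, h.2])
  · constructor
    · rintro ⟨r, hr1, hr2⟩; linarith
    · intro h; exact ⟨P + 1, by linarith, by linarith⟩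
end

section
/- In a two-channel prisoner's dilemma game, a ZD strategy of player 1 unilaterally enforcing ⟨s_1^(1)⟩ + ⟨s_2^(2)⟩ = r exists if and only if R^(1) + P^(2) ≤ r ≤ P^(1) + R^(2); in particular such an r exists iff R^(1) − P^(1) ≤ R^(2) − P^(2). -/
lemma boolUniv : (Finset.univ : Finset Bool) = {false, true} := by decide

lemma maxmin_bool (f : Bool → Bool → ℝ) :
    maxmin f = max (min (f false false) (f false true)) (min (f true false) (f true true)) := by
  simp [maxmin, boolUniv, Finset.sup'_insert, Finset.inf'_insert]
  rw [sup_comm, inf_comm (f false true), inf_comm (f true true)]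

lemma minmax_bool (f : Bool → Bool → ℝ) :
    minmax f = min (max (f false false) (f false true)) (max (f true false) (f true true)) := by
  simp [minmax, boolUniv, Finset.sup'_insert, Finset.inf'_insert]
  rw [inf_comm, sup_comm (f false true), sup_comm (f true true)]

/-- Two-channel prisoner's dilemma; actions `true` = C, `false` = D.
`s1c1` is player 1's payoff in channel 1 and `s2c2` is player 2's payoff in
channel 2. -/
theorem two_channel_PD_cross_control (R1 S1 T1 P1 R2 S2 T2 P2 : ℝ)
    (s1c1 s2c2 : Bool → Bool → ℝ)
    (hpay1 : s1c1 true true = R1 ∧ s1c1 true false = S1 ∧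
      s1c1 false true = T1 ∧ s1c1 false false = P1)
    (hord1 : T1 > R1 ∧ R1 > P1 ∧ P1 > S1)
    (hpay2 : s2c2 true true = R2 ∧ s2c2 true false = T2 ∧
      s2c2 false true = S2 ∧ s2c2 false false = P2)
    (hord2 : T2 > R2 ∧ R2 > P2 ∧ P2 > S2) :
    (∀ r : ℝ, ((maxmin s1c1 + maxmin s2c2 ≥ r) ∧ (minmax s1c1 + minmax s2c2 ≤ r)) ↔
      (R1 + P2 ≤ r ∧ r ≤ P1 + R2)) ∧
    ((∃ r : ℝ, (maxmin s1c1 + maxmin s2c2 ≥ r) ∧ (minmax s1c1 + minmax s2c2 ≤ r)) ↔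
      R1 - P1 ≤ R2 - P2) := by
  obtain ⟨h1, h2, h3, h4⟩ := hpay1
  obtain ⟨g1, g2, g3, g4⟩ := hpay2
  obtain ⟨o1, o2, o3⟩ := hord1
  obtain ⟨p1, p2, p3⟩ := hord2
  have e1 : maxmin s1c1 = P1 := by
    rw [maxmin_bool, h4, h3, h2, h1,
      min_eq_left (by linarith : P1 ≤ T1), min_eq_left (by linarith : S1 ≤ R1),
      max_eq_left (by linarith : S1 ≤ P1)]
  have e2 : minmax s1c1 = R1 := by
    rw [minmax_bool, h4, h3, h2, h1,
      max_eq_right (by linarith : P1 ≤ T1), max_eq_right (by linarith : S1 ≤ R1),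
      min_eq_right (by linarith : R1 ≤ T1)]
  have e3 : maxmin s2c2 = R2 := by
    rw [maxmin_bool, g4, g3, g2, g1,
      min_eq_right (by linarith : S2 ≤ P2), min_eq_right (by linarith : R2 ≤ T2),
      max_eq_right (by linarith : S2 ≤ R2)]
  have e4 : minmax s2c2 = P2 := by
    rw [minmax_bool, g4, g3, g2, g1,
      max_eq_left (by linarith : S2 ≤ P2), max_eq_left (by linarith : R2 ≤ T2),
      min_eq_left (by linarith : P2 ≤ T2)]
  rw [e1, e2, e3, e4]
  constructor
  · intro r
    constructor <;> rintro ⟨ha, hb⟩ <;> constructor <;> linarith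
  · constructor
    · rintro ⟨r, ha, hb⟩; linarith
    · intro h; exact ⟨R1 + P2, by linarith, by linarith⟩
end

section
/- Akin's lemma for multichannel games: if player j uses a memory-one strategy T_j(·|·) and P* is the limit-of-time-averages distribution of action profiles, then for every action ā_j of player j, Σ_{a'} (T_j(ā_j | a') − δ_{ā_j, a'_j}) P*(a') = 0, where a'_j denotes player j's component of the profile a'. -/
/-! The weighted sum is the Cesàro limit of the one-step drift of player j's marginal: by
marginal consistency, `∑ a', (T aj a' - δ) P_t(a')` is the probability that player j plays
`aj` at round `t + 1` minus that at round `t`. Averaged over `n` rounds these differences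
telescope to a difference of two probabilities divided by `n`, which tends to `0`. -/

open Filter Finset Topology

lemma tendsto_cesaro_sub_of_abs_le {f : ℕ → ℝ} {C : ℝ} (hf : ∀ t, |f t| ≤ C) :
    Tendsto (fun n : ℕ => (1 / (n : ℝ)) * ∑ t ∈ range n, (f (t + 1) - f t)) atTop (𝓝 0) := by
  simp only [sum_range_sub]
  refine tendsto_one_div_atTop_nhds_zero_nat.zero_mul_isBoundedUnder_le
    (isBoundedUnder_of ⟨C + C, fun n => ?_⟩)
  exact (abs_sub _ _).trans (add_le_add (hf n) (hf 0))

lemma tendsto_cesaro_sum_mul {ι : Type*} [Fintype ι] (c : ι → ℝ) {P : ℕ → ι → ℝ}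
    {Pstar : ι → ℝ}
    (hlim : ∀ a, Tendsto (fun n : ℕ => (1 / (n : ℝ)) * ∑ t ∈ range n, P t a) atTop
      (𝓝 (Pstar a))) :
    Tendsto (fun n : ℕ => (1 / (n : ℝ)) * ∑ t ∈ range n, ∑ a, c a * P t a) atTop
      (𝓝 (∑ a, c a * Pstar a)) := by
  have hrw : ∀ n : ℕ, (1 / (n : ℝ)) * ∑ t ∈ range n, ∑ a, c a * P t a
      = ∑ a, c a * ((1 / (n : ℝ)) * ∑ t ∈ range n, P t a) := by
    intro n
    simp only [sum_comm (s := range n), mul_sum]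
    exact sum_congr rfl fun _ _ => sum_congr rfl fun _ _ => by ring
  simp only [hrw]
  exact tendsto_finsetSum _ fun a _ => (hlim a).const_mul (c a)

lemma sum_sub_ite_mul_eq {ι κ : Type*} [Fintype ι] [DecidableEq κ] (π : ι → κ) (k : κ)
    (w p q : ι → ℝ) (hw : ∑ a, w a * p a = ∑ a ∈ univ.filter (π · = k), q a) :
    ∑ a, (w a - if π a = k then 1 else 0) * p a
      = ∑ a ∈ univ.filter (π · = k), q a - ∑ a ∈ univ.filter (π · = k), p a := by
  simp only [sub_mul, sum_sub_distrib, hw, ite_mul, one_mul, zero_mul, sum_filter]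

lemma abs_sum_filter_le_one {ι : Type*} [Fintype ι] {p : ι → ℝ} (hp : ∀ a, 0 ≤ p a)
    (hsum : ∑ a, p a = 1) (s : ι → Prop) [DecidablePred s] :
    |∑ a ∈ univ.filter s, p a| ≤ 1 := by
  rw [abs_of_nonneg (sum_nonneg fun a _ => hp a), ← hsum]
  exact sum_le_sum_of_subset_of_nonneg (filter_subset _ _) fun a _ _ => hp a

theorem akin_lemma_multichannel_general {𝒜 𝒜j : Type*} [Fintype 𝒜]
    [DecidableEq 𝒜j] (π : 𝒜 → 𝒜j)
    (T : 𝒜j → 𝒜 → ℝ) (P : ℕ → 𝒜 → ℝ) (Pstar : 𝒜 → ℝ)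
    (hP_nonneg : ∀ t a, 0 ≤ P t a)
    (hP_sum : ∀ t, ∑ a, P t a = 1)
    (hlim : ∀ a : 𝒜,
      Tendsto (fun n : ℕ => (1 / (n : ℝ)) * ∑ t ∈ Finset.range n, P (t + 1) a)
        atTop (nhds (Pstar a)))
    (hmarg : ∀ t : ℕ, ∀ aj : 𝒜j,
      ∑ a', T aj a' * P t a' = ∑ a ∈ Finset.univ.filter (fun a => π a = aj), P (t + 1) a) :
    ∀ aj : 𝒜j,
      ∑ a', (T aj a' - (if π a' = aj then (1 : ℝ) else 0)) * Pstar a' = 0 := by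
  intro aj
  set f : ℕ → ℝ := fun t => ∑ a ∈ univ.filter (π · = aj), P (t + 1) a
  have hdrift : ∀ t, ∑ a', (T aj a' - if π a' = aj then 1 else 0) * P (t + 1) a'
      = f (t + 1) - f t :=
    fun t => sum_sub_ite_mul_eq π aj _ _ _ (hmarg (t + 1) aj)
  have hf_bdd : ∀ t, |f t| ≤ 1 :=
    fun t => abs_sum_filter_le_one (hP_nonneg (t + 1)) (hP_sum (t + 1)) _
  refine tendsto_nhds_unique (tendsto_cesaro_sum_mul _ hlim) ?_
  simpa only [hdrift] using tendsto_cesaro_sub_of_abs_le hf_bdd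

/-- **Akin's lemma for multichannel games.**
`𝒜` is the finite set of action profiles, `𝒜j` the finite set of player j's
(multichannel) actions, and `π` extracts player j's component of a profile.
`T` is player j's memory-one strategy, `P t` is the distribution of the action
profile at round `t` (rounds are `1, 2, ...`, so round `t` is `P t`), and
`Pstar` is the limit of the time averages of the `P t`.  The hypothesis
`hmarg` is the marginal consistency: the probability that player j plays
`aj` at round `t+1` equals `∑_{a'} T aj a' * P t a'`. -/
theorem akin_lemma_multichannel {𝒜 𝒜j : Type*} [Fintype 𝒜] [Nonempty 𝒜]
    [Fintype 𝒜j] [DecidableEq 𝒜j] (π : 𝒜 → 𝒜j)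
    (T : 𝒜j → 𝒜 → ℝ) (P : ℕ → 𝒜 → ℝ) (Pstar : 𝒜 → ℝ)
    (hT_nonneg : ∀ aj a', 0 ≤ T aj a')
    (hT_sum : ∀ a', ∑ aj, T aj a' = 1)
    (hP_nonneg : ∀ t a, 0 ≤ P t a)
    (hP_sum : ∀ t, ∑ a, P t a = 1)
    (hlim : ∀ a : 𝒜,
      Tendsto (fun n : ℕ => (1 / (n : ℝ)) * ∑ t ∈ Finset.range n, P (t + 1) a)
        atTop (nhds (Pstar a)))
    (hmarg : ∀ t : ℕ, ∀ aj : 𝒜j,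
      ∑ a', T aj a' * P t a' = ∑ a ∈ Finset.univ.filter (fun a => π a = aj), P (t + 1) a) :
    ∀ aj : 𝒜j,
      ∑ a', (T aj a' - (if π a' = aj then (1 : ℝ) else 0)) * Pstar a' = 0 :=
  akin_lemma_multichannel_general π T P Pstar hP_nonneg hP_sum hlim hmarg
end
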